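/- arXiv:math/0410425 — 3 statements merged into one kernel-verified Lean document; each statement's English description precedes it below -/
import Mathlib

section
/- Let 𝒜 be a multiset of subsets of a finite set S, let X, Y ∈ 𝒜 with X ⊆ Y, and let z ∈ X. If 𝒜' is obtained from 𝒜 by replacing one or more occurrences of Y by Y \ {z}, then the transversal matroids M[𝒜] and M[𝒜'] are equal. -/
open Set Matroid

variable {α ι : Type*}

/-- `M` is the transversal matroid on ground set `S` presented by the set system `A`:
the independent sets of `M` are exactly the partial transversals of `A`. -/
def IsTransversalPres (M : Matroid α) (S : Set α) (A : ι → Set α) : Prop :=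
  M.E = S ∧ ∀ I : Set α, M.Indep I ↔ I ⊆ S ∧
    ∃ φ : I → ι, Function.Injective φ ∧ ∀ x : I, (x : α) ∈ A (φ x)

/-- `σ` is a cyclic permutation of the set `E`. -/
def IsCyclicOn (σ : Equiv.Perm α) (E : Set α) : Prop :=
  (∀ x ∉ E, σ x = x) ∧ ∀ x ∈ E, ∀ y ∈ E, ∃ n : ℕ, (σ ^ n) x = y

/-- `I` is the σ-interval with first element `f` and last element `l`. -/
def IsCycInterval (σ : Equiv.Perm α) (f l : α) (I : Set α) : Prop :=
  ∃ k : ℕ, (σ ^ k) f = l ∧ I = {x | ∃ j ≤ k, (σ ^ j) f = x}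

/-- The family of sets `A` is an antichain: no member contains another. -/
def IsSetAntichain (A : ι → Set α) : Prop := ∀ i j, i ≠ j → ¬ A i ⊆ A j

/-- `A` (with first elements `f` and last elements `l`) is a presentation of `M` by an
antichain of σ-intervals in the cyclic permutation `σ` of the ground set. -/
def IsMultiPathPres (M : Matroid α) (σ : Equiv.Perm α) {r : ℕ}
    (f l : Fin r → α) (A : Fin r → Set α) : Prop :=
  IsCyclicOn σ M.E ∧ (∀ i, f i ∈ M.E) ∧ (∀ i, IsCycInterval σ (f i) (l i) (A i)) ∧
  IsSetAntichain A ∧ IsTransversalPres M M.E A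

/-- A multi-path matroid: a transversal matroid with a presentation by an antichain of
σ-intervals in some cyclic permutation of the ground set. -/
def IsMultiPath (M : Matroid α) : Prop :=
  ∃ (σ : Equiv.Perm α) (r : ℕ) (f : Fin r → α) (l : Fin r → α) (A : Fin r → Set α),
    IsMultiPathPres M σ f l A

/-- A lattice path matroid: a transversal matroid with a presentation by an antichain of
(nonempty) intervals in some linear order (encoded by an injection `g` into `ℕ`) on the
ground set. -/
def IsLatticePathM (M : Matroid α) : Prop :=
  ∃ g : α → ℕ, Set.InjOn g M.E ∧
    ∃ (r : ℕ) (A : Fin r → Set α) (a b : Fin r → ℕ),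
      (∀ i, A i = {x ∈ M.E | a i ≤ g x ∧ g x ≤ b i}) ∧ (∀ i, (A i).Nonempty) ∧
      IsSetAntichain A ∧ IsTransversalPres M M.E A

/-- Deletion `M \ X`. -/
def mDelete (M : Matroid α) (X : Set α) : Matroid α := M ↾ (M.E \ X)

/-- Contraction `M / X`. -/
def mContract (M : Matroid α) (X : Set α) : Matroid α := (mDelete M✶ X)✶

/-- `N` is a minor of `M`. -/
def IsMinorOf (N M : Matroid α) : Prop :=
  ∃ C D : Set α, C ⊆ M.E ∧ D ⊆ M.E ∧ Disjoint C D ∧ N = mDelete (mContract M C) D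

/-- `C` is a circuit of `M`: a minimal dependent set. -/
def IsCircuitOf (M : Matroid α) (C : Set α) : Prop :=
  M.Dep C ∧ ∀ D ⊂ C, ¬ M.Dep D

/-- `C` is a cocircuit of `M`: a circuit of the dual. -/
def IsCocircuitOf (M : Matroid α) (C : Set α) : Prop := IsCircuitOf M✶ C

/-- `M` is connected: it has no loops and every pair of distinct elements of the
ground set lies in a common circuit. -/
def IsConnectedM (M : Matroid α) : Prop :=
  (∀ e ∈ M.E, M.Indep {e}) ∧
  ∀ x ∈ M.E, ∀ y ∈ M.E, x ≠ y → ∃ C, IsCircuitOf M C ∧ x ∈ C ∧ y ∈ C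

/-- The height of the lattice path with set of North steps `w` after its first `t` steps. -/
noncomputable def pathHt {n : ℕ} (w : Set (Fin n)) (t : ℕ) : ℕ := (w ∩ {j | (j : ℕ) < t}).ncard

/-- `w` is (the set of North steps of) a lattice path from `(0,0)` to `(m,r)` going
neither below `P` nor above `Q`. -/
def IsPathBetween (m r : ℕ) (P Q w : Set (Fin (m + r))) : Prop :=
  pathHt w (m + r) = r ∧ ∀ t ≤ m + r, pathHt P t ≤ pathHt w t ∧ pathHt w t ≤ pathHt Q t

/-- The data `(k, m, r, P, Q)` is a diagram: `P` and `Q` are lattice paths with `m` East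
and `r` North steps (starting at `p_1 = (k-1,0)` and `p_k = (0,k-1)` respectively) and,
comparing heights along antidiagonals, `Q` never goes below `P`. -/
def IsDiagram (k m r : ℕ) (P Q : Set (Fin (m + r))) : Prop :=
  1 ≤ k ∧ pathHt P (m + r) = r ∧ pathHt Q (m + r) = r ∧
    ∀ t ≤ m + r, pathHt P t ≤ k - 1 + pathHt Q t

/-- `w` is a b-path of the diagram `(k, m, r, P, Q)` from the starting point
`p_i = (k-i, i-1)` to the ending point `p'_i`: it stays weakly above `P` and weakly
below `Q` (heights compared along antidiagonals). -/
def IsBPath (k m r : ℕ) (P Q : Set (Fin (m + r))) (i : ℕ) (w : Set (Fin (m + r))) : Prop :=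
  1 ≤ i ∧ i ≤ k ∧ pathHt w (m + r) = r ∧
  ∀ t ≤ m + r, pathHt P t ≤ i - 1 + pathHt w t ∧ i - 1 + pathHt w t ≤ k - 1 + pathHt Q t

/-- A matroid isomorphism between matroids on possibly different types. -/
def MatroidIso {β : Type*} (M : Matroid α) (N : Matroid β) : Prop :=
  ∃ e : α → β, Set.BijOn e M.E N.E ∧ ∀ B ⊆ M.E, (M.IsBase B ↔ N.IsBase (e '' B))

/-- `b` is the first element of `X` encountered strictly after `a` in the cyclic order `σ`
(i.e. `b` is the image of `a` under the cyclic permutation induced by `σ` on `X`). -/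
def CycNextIn (σ : Equiv.Perm α) (X : Set α) (a b : α) : Prop :=
  ∃ n : ℕ, 1 ≤ n ∧ (σ ^ n) a = b ∧ ∀ j, 1 ≤ j → j < n → (σ ^ j) a ∉ X

/-!
Every partial transversal of `𝒜'` is one of `𝒜`, since `𝒜'` only shrinks sets. Conversely,
a matching of `𝒜` can fail for `𝒜'` only at `z`, matched to some shrunk copy of `Y`; then
swap the sets matched to `z` and to `X`: `z` goes to `X`, and the former partner of `X`,
an element of `X \ {z} ⊆ Y \ {z}`, goes to the shrunk copy of `Y`.
-/

open Function

def IsPartialTransversal (A : ι → Set α) (I : Set α) : Prop :=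
  ∃ φ : I → ι, Injective φ ∧ ∀ x : I, (x : α) ∈ A (φ x)

namespace IsPartialTransversal

variable {A A' : ι → Set α} {I : Set α}

theorem mono (h : ∀ j, A j ⊆ A' j) (hI : IsPartialTransversal A I) :
    IsPartialTransversal A' I :=
  let ⟨φ, hφ, hmem⟩ := hI
  ⟨φ, hφ, fun x => h _ (hmem x)⟩

theorem of_diff_singleton_subset {z : α} {jX : ι} (hA : ∀ j, A j \ {z} ⊆ A' j)
    (hzX : z ∈ A' jX) (hX : ∀ k, z ∈ A k → z ∉ A' k → A jX \ {z} ⊆ A' k)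
    (hI : IsPartialTransversal A I) : IsPartialTransversal A' I := by
  classical
  obtain ⟨φ, hφ, hmem⟩ := hI
  obtain hgood | ⟨x₀, hx₀⟩ := forall_or_exists_not fun x : I => (x : α) ∈ A' (φ x)
  · exact ⟨φ, hφ, hgood⟩
  have hx₀z : (x₀ : α) = z := by_contra fun h => hx₀ (hA _ ⟨hmem x₀, h⟩)
  have hxz : ∀ x, x ≠ x₀ → (x : α) ≠ z := fun x h hx => h (Subtype.ext (hx.trans hx₀z.symm))
  refine ⟨Equiv.swap jX (φ x₀) ∘ φ, (Equiv.swap _ _).injective.comp hφ, fun x => ?_⟩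
  by_cases h₀ : x = x₀
  · subst h₀
    simpa only [comp_apply, Equiv.swap_apply_right, hx₀z] using hzX
  by_cases hjX : φ x = jX
  · rw [comp_apply, hjX, Equiv.swap_apply_left]
    exact hX _ (hx₀z ▸ hmem x₀) (hx₀z ▸ hx₀) ⟨hjX ▸ hmem x, hxz x h₀⟩
  · rw [comp_apply, Equiv.swap_apply_of_ne_of_ne hjX (hφ.ne h₀)]
    exact hA _ ⟨hmem x, hxz x h₀⟩

end IsPartialTransversal

theorem IsTransversalPres.eq_of_isPartialTransversal_iff {M M' : Matroid α} {S : Set α}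
    {A A' : ι → Set α} (hM : IsTransversalPres M S A) (hM' : IsTransversalPres M' S A')
    (h : ∀ I ⊆ S, IsPartialTransversal A I ↔ IsPartialTransversal A' I) : M = M' := by
  obtain ⟨hE, hI⟩ := hM
  obtain ⟨hE', hI'⟩ := hM'
  refine ext_indep (hE.trans hE'.symm) fun I _ => ?_
  rw [hI, hI']
  exact and_congr_right fun hIS => h I hIS

theorem stmt_0_general {α ι : Type*} (S : Set α) (A A' : ι → Set α)
    (jX jY : ι) (z : α) (hzX : z ∈ A jX) (hXY : A jX ⊆ A jY)
    (hrepl : ∀ j, A' j = A j ∨ (A j = A jY ∧ A' j = A jY \ {z}))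
    (hX' : A' jX = A jX)
    (M M' : Matroid α) (hM : IsTransversalPres M S A) (hM' : IsTransversalPres M' S A') :
    M = M' := by
  have hshrink : ∀ j, A' j ⊆ A j := fun j => by
    rcases hrepl j with h | ⟨h₁, h₂⟩
    · exact h.subset
    · exact h₂ ▸ h₁ ▸ sdiff_subset
  have hdiff : ∀ j, A j \ {z} ⊆ A' j := fun j => by
    rcases hrepl j with h | ⟨h₁, h₂⟩
    · exact h ▸ sdiff_subset
    · exact h₁ ▸ h₂.superset
  have hX : ∀ k, z ∈ A k → z ∉ A' k → A jX \ {z} ⊆ A' k := fun k hz hz' => by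
    rcases hrepl k with h | ⟨-, h₂⟩
    · exact absurd (h ▸ hz) hz'
    · exact h₂ ▸ sdiff_subset_sdiff_left hXY
  exact hM.eq_of_isPartialTransversal_iff hM' fun I _ =>
    ⟨.of_diff_singleton_subset hdiff (hX' ▸ hzX) hX, .mono hshrink⟩

/-- If `X ⊆ Y` are members of a set system `A` on a finite set `S` and `z ∈ X`, then
replacing one or more occurrences of `Y` by `Y \ {z}` (leaving the occurrence `X` intact)
does not change the transversal matroid. -/
theorem stmt_0 {α ι : Type*} [Fintype α] (S : Set α) (A A' : ι → Set α)
    (jX jY : ι) (hne : jX ≠ jY) (z : α) (hzX : z ∈ A jX) (hXY : A jX ⊆ A jY)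
    (hrepl : ∀ j, A' j = A j ∨ (A j = A jY ∧ A' j = A jY \ {z}))
    (hX' : A' jX = A jX)
    (hone : ∃ j, A j = A jY ∧ A' j = A jY \ {z})
    (M M' : Matroid α) (hM : IsTransversalPres M S A) (hM' : IsTransversalPres M' S A') :
    M = M' :=
  stmt_0_general S A A' jX jY z hzX hXY hrepl hX' M M' hM hM'
end

section
/- For lattice paths P, Q from (0,0) to (m,r) with P never above Q, the map R ↦ {i : the i-th step of R is North} is a bijection from the set 𝒫 of lattice paths from (0,0) to (m,r) lying weakly between P and Q onto the set of bases of the lattice path matroid M[P,Q]. -/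
open Set Matroid

variable {α ι : Type*}

/-!
A lattice path `w` between `P` and `Q` is a transversal of the presentation: its North step
at height `h` lies in the `h`-th set. It has `r` elements, as many as there are sets, so it
is a basis. Conversely, a basis `R` has `r` elements and is matched injectively, `j ↦ f j`,
to the sets containing it. Membership of `j` in the `i`-th set forces
`pathHt P j ≤ i < pathHt Q (j + 1)`. Counting the steps of `R` before time `t`, matched into
`[0, pathHt Q t)`, shows that `R` stays below `Q`; counting its steps from time `t` on,
matched into `[pathHt P t, r)`, shows that `R` stays above `P`.
-/

namespace IsTransversalPres

variable {M : Matroid α} {S : Set α}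

theorem ncard_le_of_indep [Finite ι] {A : ι → Set α} (hM : IsTransversalPres M S A)
    {I : Set α} (hI : M.Indep I) : I.ncard ≤ Nat.card ι := by
  obtain ⟨-, φ, hφ, -⟩ := (hM.2 I).1 hI
  simpa using Nat.card_le_card_of_injective φ hφ

theorem isBase_of_ncard_eq [Finite α] [Finite ι] {A : ι → Set α}
    (hM : IsTransversalPres M S A) {I : Set α} (hI : M.Indep I) (hcard : I.ncard = Nat.card ι) :
    M.IsBase I :=
  hI.isBase_of_maximal fun _ hJ hIJ ↦ eq_of_subset_of_ncard_le hIJ (hcard ▸ hM.ncard_le_of_indep hJ)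

theorem exists_injOn_of_indep {r : ℕ} {A : Fin r → Set α} (hM : IsTransversalPres M S A)
    {I : Set α} (hI : M.Indep I) :
    ∃ f : α → ℕ, InjOn f I ∧ ∀ x ∈ I, ∃ i : Fin r, f x = i ∧ x ∈ A i := by
  classical
  obtain ⟨-, φ, hφ, hmem⟩ := (hM.2 I).1 hI
  refine ⟨fun x ↦ if h : x ∈ I then φ ⟨x, h⟩ else 0, fun x hx y hy hxy ↦ ?_,
    fun x hx ↦ ⟨φ ⟨x, hx⟩, dif_pos hx, hmem _⟩⟩
  simp only [dif_pos hx, dif_pos hy] at hxy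
  exact congrArg Subtype.val (hφ (Fin.ext hxy))

end IsTransversalPres

section pathHt

variable {n : ℕ}

theorem pathHt_mono (w : Set (Fin n)) : Monotone (pathHt w) :=
  fun _ _ h ↦ ncard_le_ncard (fun _ hx ↦ ⟨hx.1, hx.2.trans_le h⟩)

theorem pathHt_le_ncard (w : Set (Fin n)) (t : ℕ) : pathHt w t ≤ w.ncard :=
  ncard_le_ncard inter_subset_left

theorem pathHt_eq_ncard (w : Set (Fin n)) : pathHt w n = w.ncard := by
  simp [pathHt]

theorem pathHt_succ_of_mem {w : Set (Fin n)} {j : Fin n} (hj : j ∈ w) :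
    pathHt w (j + 1) = pathHt w j + 1 := by
  have : w ∩ {x | (x : ℕ) < j + 1} = insert j (w ∩ {x | (x : ℕ) < j}) := by
    ext x
    simp only [mem_inter_iff, mem_ofPred_eq, mem_insert_iff, Nat.lt_succ_iff_lt_or_eq, Fin.ext_iff]
    constructor
    · rintro ⟨hx, hlt | heq⟩
      exacts [Or.inr ⟨hx, hlt⟩, Or.inl heq]
    · rintro (heq | ⟨hx, hlt⟩)
      exacts [⟨Fin.ext heq ▸ hj, Or.inr heq⟩, ⟨hx, Or.inl hlt⟩]
  rw [pathHt, this, ncard_insert_of_notMem (by simp), pathHt]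

theorem pathHt_lt_ncard_of_mem {w : Set (Fin n)} {j : Fin n} (hj : j ∈ w) :
    pathHt w j < w.ncard := by
  have := pathHt_le_ncard w (j + 1)
  rw [pathHt_succ_of_mem hj] at this
  omega

theorem strictMonoOn_pathHt (w : Set (Fin n)) : StrictMonoOn (fun x : Fin n ↦ pathHt w x) w := by
  intro x hx y _ hxy
  show pathHt w x < pathHt w y
  have := pathHt_mono w (Nat.succ_le_of_lt hxy)
  rw [pathHt_succ_of_mem hx] at this
  omega

theorem pathHt_le_of_injOn {R Q : Set (Fin n)} {f : Fin n → ℕ} (hf : InjOn f R)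
    (hQ : ∀ j ∈ R, f j < pathHt Q (j + 1)) (t : ℕ) : pathHt R t ≤ pathHt Q t := by
  have hmaps : ∀ j ∈ R ∩ {j | (j : ℕ) < t}, f j ∈ Iio (pathHt Q t) :=
    fun j hj ↦ (hQ j hj.1).trans_le (pathHt_mono Q hj.2)
  simpa [pathHt] using ncard_le_ncard_of_injOn f hmaps (hf.mono inter_subset_left)

theorem le_pathHt_of_injOn {P R : Set (Fin n)} {f : Fin n → ℕ} {k : ℕ} (hf : InjOn f R)
    (hP : ∀ j ∈ R, pathHt P j ≤ f j) (hk : ∀ j ∈ R, f j < k) (hPk : P.ncard ≤ k)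
    (hkR : k ≤ R.ncard) (t : ℕ) : pathHt P t ≤ pathHt R t := by
  have hmaps : ∀ j ∈ R \ {j | (j : ℕ) < t}, f j ∈ Ico (pathHt P t) k :=
    fun j hj ↦ ⟨(pathHt_mono P (not_lt.1 hj.2)).trans (hP j hj.1), hk j hj.1⟩
  have hcount := ncard_le_ncard_of_injOn f hmaps (hf.mono sdiff_subset)
  have hsplit := ncard_inter_add_ncard_sdiff_eq_ncard R {j : Fin n | (j : ℕ) < t}
  have hPt := pathHt_le_ncard P t
  rw [ncard_Ico_nat] at hcount
  unfold pathHt at *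
  omega

end pathHt

section LatticePathMatroid

variable {m r : ℕ} {P Q : Set (Fin (m + r))}

/-- The paper's `N_{i+1}`: indices are shifted since `i : Fin r` starts at `0`. -/
def northSteps (m r : ℕ) (P Q : Set (Fin (m + r))) (i : Fin r) : Set (Fin (m + r)) :=
  {j | ∃ R, IsPathBetween m r P Q R ∧ j ∈ R ∧ pathHt R ((j : ℕ) + 1) = (i : ℕ) + 1}

theorem IsPathBetween.ncard_eq {w : Set (Fin (m + r))} (hw : IsPathBetween m r P Q w) :
    w.ncard = r :=
  pathHt_eq_ncard w ▸ hw.1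

theorem IsPathBetween.mem_northSteps {w : Set (Fin (m + r))} (hw : IsPathBetween m r P Q w)
    {j : Fin (m + r)} (hj : j ∈ w) :
    j ∈ northSteps m r P Q ⟨pathHt w j, (pathHt_lt_ncard_of_mem hj).trans_eq hw.ncard_eq⟩ :=
  ⟨w, hw, hj, pathHt_succ_of_mem hj⟩

theorem bounds_of_mem_northSteps {i : Fin r} {j : Fin (m + r)} (hj : j ∈ northSteps m r P Q i) :
    pathHt P j ≤ i ∧ (i : ℕ) < pathHt Q (j + 1) := by
  obtain ⟨w, hw, hjw, hwj⟩ := hj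
  have hwi : pathHt w j = i := by rw [pathHt_succ_of_mem hjw] at hwj; omega
  have hPw := (hw.2 j j.isLt.le).1
  have hwQ := (hw.2 (j + 1) j.isLt).2
  omega

theorem IsPathBetween.indep {M : Matroid (Fin (m + r))}
    (hM : IsTransversalPres M univ (northSteps m r P Q)) {w : Set (Fin (m + r))}
    (hw : IsPathBetween m r P Q w) : M.Indep w := by
  refine (hM.2 w).2 ⟨subset_univ w, fun x ↦ ⟨pathHt w x, ?_⟩, fun x y hxy ↦ ?_,
    fun x ↦ hw.mem_northSteps x.2⟩
  · exact (pathHt_lt_ncard_of_mem x.2).trans_eq hw.ncard_eq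
  · exact Subtype.ext ((strictMonoOn_pathHt w).injOn x.2 y.2 (congrArg Fin.val hxy))

end LatticePathMatroid

theorem stmt_10_general (m r : ℕ) (P Q : Set (Fin (m + r)))
    (hP : pathHt P (m + r) = r)
    (hPQ : ∀ t ≤ m + r, pathHt P t ≤ pathHt Q t)
    (M : Matroid (Fin (m + r)))
    (hM : IsTransversalPres M (Set.univ : Set (Fin (m + r)))
      (fun i : Fin r => {j | ∃ R, IsPathBetween m r P Q R ∧ j ∈ R ∧
          pathHt R ((j : ℕ) + 1) = (i : ℕ) + 1})) :
    ∀ R : Set (Fin (m + r)), IsPathBetween m r P Q R ↔ M.IsBase R := by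
  change IsTransversalPres M univ (northSteps m r P Q) at hM
  have hbase : ∀ w, IsPathBetween m r P Q w → M.IsBase w := fun w hw ↦
    hM.isBase_of_ncard_eq (hw.indep hM) (by simp [hw.ncard_eq])
  intro R
  refine ⟨hbase R, fun hR ↦ ?_⟩
  have hPpath : IsPathBetween m r P Q P := ⟨hP, fun t ht ↦ ⟨le_rfl, hPQ t ht⟩⟩
  have hRcard : R.ncard = r :=
    (hR.ncard_eq_ncard_of_isBase (hbase P hPpath)).trans hPpath.ncard_eq
  obtain ⟨f, hf, hfN⟩ := hM.exists_injOn_of_indep hR.indep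
  have hbounds : ∀ j ∈ R, pathHt P j ≤ f j ∧ f j < pathHt Q (j + 1) ∧ f j < r := by
    intro j hj
    obtain ⟨i, hfi, hji⟩ := hfN j hj
    exact hfi ▸ ⟨(bounds_of_mem_northSteps hji).1, (bounds_of_mem_northSteps hji).2, i.isLt⟩
  refine ⟨pathHt_eq_ncard R ▸ hRcard, fun t _ ↦ ⟨?_, ?_⟩⟩
  · exact le_pathHt_of_injOn hf (fun j hj ↦ (hbounds j hj).1) (fun j hj ↦ (hbounds j hj).2.2)
      hPpath.ncard_eq.le hRcard.ge t
  · exact pathHt_le_of_injOn hf (fun j hj ↦ (hbounds j hj).2.1) t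

/-- For lattice paths `P, Q` from `(0,0)` to `(m,r)` with `P` never above `Q`, the map
sending a path to its set of North-step positions is a bijection from the set of lattice
paths lying weakly between `P` and `Q` onto the set of bases of the lattice path matroid
`M[P,Q]`.  (Paths are encoded by their sets of North-step positions, so the map is the
identity and the statement is that the two collections coincide.) -/
theorem stmt_10 (m r : ℕ) (P Q : Set (Fin (m + r)))
    (hP : pathHt P (m + r) = r) (hQ : pathHt Q (m + r) = r)
    (hPQ : ∀ t ≤ m + r, pathHt P t ≤ pathHt Q t)
    (M : Matroid (Fin (m + r)))
    (hM : IsTransversalPres M (Set.univ : Set (Fin (m + r)))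
      (fun i : Fin r => {j | ∃ R, IsPathBetween m r P Q R ∧ j ∈ R ∧
          pathHt R ((j : ℕ) + 1) = (i : ℕ) + 1})) :
    ∀ R : Set (Fin (m + r)), IsPathBetween m r P Q R ↔ M.IsBase R :=
  stmt_10_general m r P Q hP hPQ M hM
end

section
/- Let M[ℐ] be a multi-path matroid that is not a lattice path matroid. Then every element of the ground set lies in a spanning circuit of M[ℐ]. In particular, M[ℐ] has a spanning circuit. Specifically, if F = {f_I : I ∈ ℐ} is the set of first elements of the intervals, then for every x ∉ F the set F ∪ {x} is a spanning circuit. -/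
open Set Matroid

variable {α ι : Type*}

/-!
Let `F` be the set of first elements. If some point `c` of the ground set is interior to no
interval, cutting the cycle at `c` turns every σ-interval into a linear interval, and if `F` is
the whole ground set the matroid is free; both would make `M[ℐ]` a lattice path matroid.
Otherwise every point is interior to some interval, and then every interval contains the next
first element after its own: the map `j ↦ next j` runs through all of `F` along the cycle.
Now `F` is a transversal, hence a base. Given `x ∉ F`, interior to the interval `i`, and any
`j`, match `x` to `i` and move each first element on the chain from `next j` to `i` to the
preceding interval of the chain; this matches `F - f_j + x`. So `F ∪ {x}` is a spanning circuit.
-/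

namespace IsTransversalPres

variable {M : Matroid α} {S : Set α} {A : ι → Set α}

theorem indep_range {κ : Type*} (htr : IsTransversalPres M S A) {u : κ → α}
    (hu : range u ⊆ S) {ψ : κ → ι} (hψ : Function.Injective ψ) (hmem : ∀ k, u k ∈ A (ψ k)) :
    M.Indep (range u) := by
  choose v hv using fun y : range u => y.2
  refine (htr.2 _).2 ⟨hu, fun y => ψ (v y), fun y₁ y₂ h => Subtype.ext ?_,
    fun y => hv y ▸ hmem (v y)⟩
  rw [← hv y₁, ← hv y₂, hψ h]

theorem ncard_le [Finite ι] (htr : IsTransversalPres M S A) {I : Set α} (hI : M.Indep I) :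
    I.ncard ≤ Nat.card ι := by
  obtain ⟨-, φ, hφ, -⟩ := (htr.2 I).1 hI
  exact (Nat.card_coe_set_eq I).symm.trans_le (Nat.card_le_card_of_injective φ hφ)

theorem isBase_range [Finite ι] (htr : IsTransversalPres M M.E A) {f : ι → α}
    (hf : Function.Injective f) (hfE : range f ⊆ M.E) (hfA : ∀ i, f i ∈ A i) :
    M.IsBase (range f) := by
  refine (htr.indep_range hfE Function.injective_id hfA).isBase_of_forall_insert
    fun e he hins => ?_
  have := htr.ncard_le hins
  rw [ncard_insert_of_notMem he.2 (toFinite _), ← Nat.card_coe_set_eq,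
    Nat.card_range_of_injective hf] at this
  omega

end IsTransversalPres

theorem Matroid.IsCircuit.isCircuitOf {M : Matroid α} {C : Set α} (hC : M.IsCircuit C) :
    IsCircuitOf M C :=
  ⟨hC.dep, fun _ hD => (hC.ssubset_indep hD).not_dep⟩

theorem exists_perm_shift_chain (g : ι → ι) (j : ι) (m : ℕ)
    (hm : ∀ a < m, g^[a] j ≠ g^[m] j) :
    ∃ ψ : Equiv.Perm ι, ψ j = g^[m] j ∧ ∀ k ≠ j, ψ k = k ∨ g (ψ k) = k := by
  classical
  suffices ∃ ψ : Equiv.Perm ι, ψ j = g^[m] j ∧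
      ∀ k ≠ j, ψ k = k ∨ ∃ a < m, ψ k = g^[a] j ∧ g^[a + 1] j = k by
    obtain ⟨ψ, hψj, hψ⟩ := this
    refine ⟨ψ, hψj, fun k hk => (hψ k hk).imp_right ?_⟩
    rintro ⟨a, -, hψk, hak⟩
    rw [hψk, ← hak, Function.iterate_succ_apply']
  induction m with
  | zero => exact ⟨1, rfl, fun k _ => Or.inl rfl⟩
  | succ m ih =>
    have hm' : ∀ a < m, g^[a] j ≠ g^[m] j := fun a ha h =>
      hm (a + 1) (by omega) (by rw [Function.iterate_succ_apply', Function.iterate_succ_apply', h])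
    obtain ⟨ψ, hψj, hψ⟩ := ih hm'
    -- `j` moves on to `g^[m+1] j`, which is sent back to `g^[m] j`
    refine ⟨Equiv.swap (g^[m] j) (g^[m + 1] j) * ψ, by simp [hψj], fun k hk => ?_⟩
    have hψk_ne : ψ k ≠ g^[m] j := hψj ▸ ψ.injective.ne hk
    rw [Equiv.Perm.mul_apply]
    rcases hψ k hk with hψk | ⟨a, ha, hψk, hak⟩
    · by_cases hk' : k = g^[m + 1] j
      · exact Or.inr ⟨m, by omega, by rw [hψk, hk', Equiv.swap_apply_right], hk'.symm⟩
      · exact Or.inl (by rw [Equiv.swap_apply_of_ne_of_ne hψk_ne (by rwa [hψk]), hψk])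
    · refine Or.inr ⟨a, by omega, ?_, hak⟩
      rw [Equiv.swap_apply_of_ne_of_ne hψk_ne (by rw [hψk]; exact hm a (by omega)), hψk]

theorem IsTransversalPres.isCircuit_insert_range [Finite ι] {M : Matroid α} {A : ι → Set α}
    (htr : IsTransversalPres M M.E A) {f : ι → α} (hf : Function.Injective f)
    (hfE : range f ⊆ M.E) (hfA : ∀ i, f i ∈ A i) {nxt : ι → ι} (hnxt : ∀ i, f (nxt i) ∈ A i)
    (hreach : ∀ i j, ∃ m, nxt^[m] j = i) {x : α} (hx : x ∈ M.E \ range f) {i : ι}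
    (hxA : x ∈ A i) : M.IsCircuit (insert x (range f)) := by
  classical
  have hB := htr.isBase_range hf hfE hfA
  refine isCircuit_iff_dep_forall_sdiff_singleton_indep.2 ⟨hB.insert_dep hx, ?_⟩
  rintro _ (rfl | ⟨j, rfl⟩)
  · exact hB.indep.subset (by simp [subset_def])
  have hm := hreach i j
  obtain ⟨ψ, hψj, hψ⟩ := exists_perm_shift_chain nxt j (Nat.find hm)
    fun a ha => by rw [Nat.find_spec hm]; exact Nat.find_min hm ha
  refine (htr.indep_range (u := Function.update f j x) ?_ ψ.injective fun k => ?_).subset ?_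
  · rintro _ ⟨k, rfl⟩
    by_cases hk : k = j
    · simpa [hk] using hx.1
    · simpa [hk] using hfE (mem_range_self k)
  · by_cases hk : k = j
    · rw [hk, Function.update_self, hψj, Nat.find_spec hm]
      exact hxA
    · rw [Function.update_of_ne hk]
      rcases hψ k hk with h | h
      · rw [h]
        exact hfA k
      · simpa only [h] using hnxt (ψ k)
  · rintro y ⟨rfl | ⟨k, rfl⟩, hne⟩
    · exact ⟨j, Function.update_self j y f⟩
    · exact ⟨k, Function.update_of_ne (by rintro rfl; exact hne rfl) x f⟩

theorem isLatticePathM_of_range_eq_ground [Countable α] {M : Matroid α} {r : ℕ}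
    {A : Fin r → Set α} (htr : IsTransversalPres M M.E A) {f : Fin r → α}
    (hf : Function.Injective f) (hfA : ∀ i, f i ∈ A i) (hE : range f = M.E) :
    IsLatticePathM M := by
  obtain ⟨g, hg⟩ := exists_injective_nat α
  have hfree : ∀ I ⊆ M.E, M.Indep I := fun I hI =>
    (htr.indep_range hE.subset Function.injective_id hfA).subset (hE ▸ hI)
  refine ⟨g, hg.injOn, r, _, fun i => g (f i), fun i => g (f i), fun i => rfl,
    fun i => ⟨f i, hE ▸ mem_range_self i, le_rfl, le_rfl⟩, fun i j hij hsub => ?_,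
    rfl, fun I => ⟨fun hI => ⟨hI.subset_ground, ?_⟩, fun hI => hfree I hI.1⟩⟩
  · have hfi := (hsub ⟨hE ▸ mem_range_self i, le_rfl, le_rfl⟩).2
    exact hij (hf (hg (le_antisymm hfi.2 hfi.1)))
  · choose φ hφ using fun y : I => (hE ▸ hI.subset_ground y.2 : (y : α) ∈ range f)
    refine ⟨φ, fun y₁ y₂ h => Subtype.ext ?_, fun y => ⟨hI.subset_ground y.2, ?_⟩⟩
    · rw [← hφ y₁, ← hφ y₂, h]
    · rw [← hφ y]
      exact ⟨le_rfl, le_rfl⟩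

theorem Equiv.Perm.pow_apply_pow_apply (σ : Equiv.Perm α) (a b : ℕ) (x : α) :
    (σ ^ a) ((σ ^ b) x) = (σ ^ (a + b)) x := by
  rw [← Equiv.Perm.mul_apply, ← pow_add]

def cycSegment (σ : Equiv.Perm α) (a : α) (k : ℕ) : Set α := {x | ∃ j ≤ k, (σ ^ j) a = x}

theorem self_mem_cycSegment (σ : Equiv.Perm α) (a : α) (k : ℕ) : a ∈ cycSegment σ a k :=
  ⟨0, k.zero_le, rfl⟩

theorem cycSegment_subset_cycSegment (σ : Equiv.Perm α) (a : α) {k k' : ℕ} (h : k ≤ k') :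
    cycSegment σ a k ⊆ cycSegment σ a k' := fun _ ⟨j, hj, hx⟩ => ⟨j, hj.trans h, hx⟩

theorem injective_of_isSetAntichain_cycSegment {σ : Equiv.Perm α} {f : ι → α} {K : ι → ℕ}
    (hac : IsSetAntichain fun i => cycSegment σ (f i) (K i)) : Function.Injective f := by
  intro i j hij
  by_contra hne
  rcases le_total (K i) (K j) with hK | hK
  · exact hac i j hne (by simpa only [hij] using cycSegment_subset_cycSegment σ (f j) hK)
  · exact hac j i (Ne.symm hne)
      (by simpa only [hij] using cycSegment_subset_cycSegment σ (f j) hK)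

theorem IsCyclicOn.isCycleOn {σ : Equiv.Perm α} {E : Set α} (h : IsCyclicOn σ E) :
    σ.IsCycleOn E := by
  refine ⟨Equiv.bijOn σ fun x => ⟨fun hσx => ?_, fun hx => ?_⟩, fun x hx y hy => ?_⟩
  · by_contra hx
    exact hx (h.1 x hx ▸ hσx)
  · by_contra hσx
    exact hσx (by rwa [σ.injective (h.1 _ hσx)])
  · obtain ⟨n, hn⟩ := h.2 x hx y hy
    exact ⟨n, by rwa [zpow_natCast]⟩

section Position

variable {σ : Equiv.Perm α} {s : Finset α} {c x : α}

/-- The position of `x` when the cycle is cut at `c` (junk value `0` off the orbit of `c`). -/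
noncomputable def cycPos (σ : Equiv.Perm α) (c x : α) : ℕ := sInf {t | (σ ^ t) c = x}

theorem pow_cycPos_apply (hσ : σ.IsCycleOn s) (hc : c ∈ s) (hx : x ∈ s) :
    (σ ^ cycPos σ c x) c = x :=
  Nat.sInf_mem (s := {t | (σ ^ t) c = x}) (hσ.exists_pow_eq' s.finite_toSet hc hx)

theorem cycPos_lt (hσ : σ.IsCycleOn s) (hc : c ∈ s) (hx : x ∈ s) : cycPos σ c x < s.card := by
  obtain ⟨n, hn, hnx⟩ := hσ.exists_pow_eq hc hx
  exact (Nat.sInf_le hnx).trans_lt hn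

theorem cycPos_pow_apply (hσ : σ.IsCycleOn s) (hc : c ∈ s) {t : ℕ} (ht : t < s.card) :
    cycPos σ c ((σ ^ t) c) = t := by
  have hts : (σ ^ t) c ∈ s := hσ.1.mapsTo.perm_pow t hc
  exact ((hσ.pow_apply_eq_pow_apply hc).1 (pow_cycPos_apply hσ hc hts)).eq_of_lt_of_lt
    (cycPos_lt hσ hc hts) ht

theorem cycSegment_eq_of_forall_pow_ne (hσ : σ.IsCycleOn s) (hc : c ∈ s) {a : α} (ha : a ∈ s)
    {k : ℕ} (hcut : ∀ t, 1 ≤ t → t ≤ k → (σ ^ t) a ≠ c) :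
    cycSegment σ a k =
      {x ∈ (s : Set α) | cycPos σ c a ≤ cycPos σ c x ∧ cycPos σ c x ≤ cycPos σ c a + k} := by
  set p := cycPos σ c a
  have hp : (σ ^ p) c = a := pow_cycPos_apply hσ hc ha
  have hpk : p + k < s.card := by
    by_contra! hle
    have hps := cycPos_lt hσ hc ha
    refine hcut (s.card - p) (by omega) (by omega) ?_
    rw [← hp, σ.pow_apply_pow_apply, Nat.sub_add_cancel hps.le, hσ.pow_card_apply hc]
  ext x
  constructor
  · rintro ⟨t, ht, rfl⟩
    have hx : (σ ^ t) a = (σ ^ (t + p)) c := by rw [← hp, σ.pow_apply_pow_apply]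
    refine ⟨hσ.1.mapsTo.perm_pow _ ha, ?_⟩
    rw [hx, cycPos_pow_apply hσ hc (by omega)]
    omega
  · rintro ⟨hx, hpx, hxk⟩
    refine ⟨cycPos σ c x - p, by omega, ?_⟩
    rw [← hp, σ.pow_apply_pow_apply, Nat.sub_add_cancel hpx, pow_cycPos_apply hσ hc hx]

end Position

theorem isLatticePathM_of_forall_pow_ne [Finite α] {M : Matroid α} {σ : Equiv.Perm α} {r : ℕ}
    {f : Fin r → α} {K : Fin r → ℕ} (hσ : IsCyclicOn σ M.E) (hfE : ∀ i, f i ∈ M.E)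
    (hac : IsSetAntichain fun i => cycSegment σ (f i) (K i))
    (htr : IsTransversalPres M M.E fun i => cycSegment σ (f i) (K i)) {c : α} (hc : c ∈ M.E)
    (hcut : ∀ i t, 1 ≤ t → t ≤ K i → (σ ^ t) (f i) ≠ c) : IsLatticePathM M := by
  set s := M.E.toFinite.toFinset
  have hs : (s : Set α) = M.E := M.E.toFinite.coe_toFinset
  have hσs : σ.IsCycleOn s := hs ▸ hσ.isCycleOn
  have hmem : ∀ {x}, x ∈ M.E → x ∈ s := fun hx => by rwa [← Finset.mem_coe, hs]
  refine ⟨cycPos σ c, fun x hx y hy hxy => ?_, r, _, fun i => cycPos σ c (f i),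
    fun i => cycPos σ c (f i) + K i, fun i => ?_,
    fun i => ⟨f i, self_mem_cycSegment σ (f i) (K i)⟩, hac, htr⟩
  · rw [← pow_cycPos_apply hσs (hmem hc) (hmem hx), hxy,
      pow_cycPos_apply hσs (hmem hc) (hmem hy)]
  · rw [← hs]
    exact cycSegment_eq_of_forall_pow_ne hσs (hmem hc) (hmem (hfE i)) (hcut i)

theorem exists_cycNextIn [Finite α] (σ : Equiv.Perm α) {X : Set α} {a : α} (ha : a ∈ X) :
    ∃ b ∈ X, CycNextIn σ X a b := by
  classical
  have h : ∃ n, 1 ≤ n ∧ (σ ^ n) a ∈ X :=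
    ⟨orderOf σ, orderOf_pos σ, by rwa [pow_orderOf_eq_one]⟩
  exact ⟨_, (Nat.find_spec h).2, Nat.find h, (Nat.find_spec h).1, rfl,
    fun t ht1 ht hX => Nat.find_min h ht ⟨ht1, hX⟩⟩

theorem exists_iterate_eq_of_cycNextIn {σ : Equiv.Perm α} {f : ι → α}
    (hf : Function.Injective f) {nxt : ι → ι}
    (hnxt : ∀ i, CycNextIn σ (range f) (f i) (f (nxt i))) {d : ℕ} {i j : ι}
    (hd : (σ ^ d) (f j) = f i) : ∃ m, nxt^[m] j = i := by
  induction d using Nat.strong_induction_on generalizing j with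
  | _ d ih =>
  rcases Nat.eq_zero_or_pos d with rfl | hd0
  · exact ⟨0, hf hd⟩
  obtain ⟨s, hs1, hs, hgap⟩ := hnxt j
  have hsd : s ≤ d := by
    by_contra! hds
    exact hgap d hd0 hds (hd ▸ mem_range_self i)
  obtain ⟨m, hm⟩ := ih (d - s) (by omega) (j := nxt j)
    (by rw [← hs, σ.pow_apply_pow_apply, Nat.sub_add_cancel hsd, hd])
  exact ⟨m + 1, hm⟩

theorem mem_cycSegment_of_cycNextIn {σ : Equiv.Perm α} {E : Set α} (hσ : MapsTo σ E E)
    {f : ι → α} {K : ι → ℕ} (hac : IsSetAntichain fun i => cycSegment σ (f i) (K i))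
    (hcover : ∀ y ∈ E, ∃ i t, 1 ≤ t ∧ t ≤ K i ∧ (σ ^ t) (f i) = y) {j : ι} (hj : f j ∈ E)
    {b : α} (hb : CycNextIn σ (range f) (f j) b) : b ∈ cycSegment σ (f j) (K j) := by
  obtain ⟨s, hs1, rfl, hgap⟩ := hb
  by_cases hsK : s ≤ K j
  · exact ⟨s, hsK, rfl⟩
  obtain ⟨i, t, ht1, htK, hti⟩ := hcover _ (hσ.perm_pow (K j + 1) hj)
  rcases le_or_gt t (K j) with htj | htj
  · -- `f i` would be a first element strictly between `f j` and `b`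
    refine (hgap (K j + 1 - t) (by omega) (by omega) ⟨i, (σ ^ t).injective ?_⟩).elim
    rw [hti, σ.pow_apply_pow_apply, Nat.add_sub_cancel' (by omega)]
  · -- the interval `j` would lie inside the interval `i`
    have hfj : (σ ^ (t - (K j + 1))) (f i) = f j :=
      (σ ^ (K j + 1)).injective (by rw [σ.pow_apply_pow_apply, Nat.add_sub_cancel' htj, hti])
    refine (hac j i (by rintro rfl; omega) ?_).elim
    rintro _ ⟨u, hu, rfl⟩
    exact ⟨u + (t - (K j + 1)), by omega, by rw [← hfj, σ.pow_apply_pow_apply]⟩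

/-- A multi-path matroid `M[ℐ]` that is not a lattice path matroid has a spanning
circuit; indeed every element lies in a spanning circuit, and specifically for the set
`F = {f_I : I ∈ ℐ}` of first elements of the intervals, `F ∪ {x}` is a spanning circuit
for every `x ∉ F` in the ground set. -/
theorem stmt_13 {α : Type*} [Fintype α] (M : Matroid α) (σ : Equiv.Perm α) {r : ℕ}
    (f l : Fin r → α) (A : Fin r → Set α) (hpres : IsMultiPathPres M σ f l A)
    (hnl : ¬ IsLatticePathM M) :
    (∃ C, IsCircuitOf M C ∧ M.Spanning C) ∧
    (∀ x ∈ M.E, ∃ C, x ∈ C ∧ IsCircuitOf M C ∧ M.Spanning C) ∧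
    (∀ x ∈ M.E, x ∉ Set.range f →
      IsCircuitOf M (Set.range f ∪ {x}) ∧ M.Spanning (Set.range f ∪ {x})) := by
  obtain ⟨hσ, hfE, hint, hac, htr⟩ := hpres
  choose K hK using hint
  obtain rfl : A = fun i => cycSegment σ (f i) (K i) := funext fun i => (hK i).2
  have hf := injective_of_isSetAntichain_cycSegment hac
  have hFE : range f ⊆ M.E := range_subset_iff.2 hfE
  have hfA (i : Fin r) : f i ∈ cycSegment σ (f i) (K i) := self_mem_cycSegment ..
  have hcover : ∀ y ∈ M.E, ∃ i t, 1 ≤ t ∧ t ≤ K i ∧ (σ ^ t) (f i) = y := by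
    by_contra! ⟨c, hc, hcut⟩
    exact hnl (isLatticePathM_of_forall_pow_ne hσ hfE hac htr hc hcut)
  have hnext (j : Fin r) : ∃ i, CycNextIn σ (range f) (f j) (f i) := by
    obtain ⟨_, ⟨i, rfl⟩, hb⟩ := exists_cycNextIn σ (mem_range_self j)
    exact ⟨i, hb⟩
  choose nxt hnxt using hnext
  have hreach (i j : Fin r) : ∃ m, nxt^[m] j = i :=
    have ⟨_, hd⟩ := hσ.2 _ (hfE j) _ (hfE i)
    exists_iterate_eq_of_cycNextIn hf hnxt hd
  have key (x : α) (hx : x ∈ M.E) (hxF : x ∉ range f) :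
      IsCircuitOf M (range f ∪ {x}) ∧ M.Spanning (range f ∪ {x}) := by
    obtain ⟨i, t, -, ht, hti⟩ := hcover x hx
    refine ⟨union_singleton ▸ (htr.isCircuit_insert_range hf hFE hfA
      (fun j => mem_cycSegment_of_cycNextIn hσ.isCycleOn.1.mapsTo hac hcover (hfE j) (hnxt j))
      hreach ⟨hx, hxF⟩ ⟨t, ht, hti⟩).isCircuitOf, ?_⟩
    exact (htr.isBase_range hf hFE hfA).spanning.superset subset_union_left
      (union_subset hFE (singleton_subset_iff.2 hx))
  obtain ⟨x₀, hx₀, hx₀F⟩ : ∃ x ∈ M.E, x ∉ range f := by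
    by_contra! hE
    exact hnl (isLatticePathM_of_range_eq_ground htr hf hfA (hFE.antisymm hE))
  refine ⟨⟨_, key x₀ hx₀ hx₀F⟩, fun x hx => ?_, key⟩
  by_cases hxF : x ∈ range f
  · exact ⟨_, Or.inl hxF, key x₀ hx₀ hx₀F⟩
  · exact ⟨_, Or.inr rfl, key x hx hxF⟩
end
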